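/- For every split-schedule S of a BPMSTP instance there exists a feasible schedule S' such that: every job is assigned to the same machine in S' as in S; on each machine, the set of occupied slots under S' equals the set of occupied slots under S (hence C_max(S') = C_max(S) and E(S') = E(S)); and for any two jobs j, j' assigned to the same machine, if min(T_j) < min(T_{j'}) in S then min(T'_j) < min(T'_{j'}) in S', i.e., the relative order of start times on each machine is preserved. -/

import Mathlib

/-- A BPMSTP instance: `N` jobs with processing times `p j` (`1 ≤ p j ≤ K`),
`M` machines with energy consumption rates `u h ≥ 0`, and a time horizon
`{1, …, K}` of time slots with costs `c t ≥ 0`. -/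
structure BInstance where
  N : ℕ
  M : ℕ
  K : ℕ
  hN : 0 < N
  hM : 0 < M
  hK : 0 < K
  p : Fin N → ℕ
  hp : ∀ j, 1 ≤ p j ∧ p j ≤ K
  u : Fin M → ℝ
  hu : ∀ h, 0 ≤ u h
  c : ℕ → ℝ
  hc : ∀ t, 0 ≤ c t

/-- A schedule assigns each job a machine and a set of `p j` time slots,
with jobs on the same machine using disjoint slot sets. -/
structure Schedule (I : BInstance) where
  mach : Fin I.N → Fin I.M
  slots : Fin I.N → Finset ℕ
  slots_subset : ∀ j, slots j ⊆ Finset.Icc 1 I.K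
  slots_card : ∀ j, (slots j).card = I.p j
  disj : ∀ j j', j ≠ j' → mach j = mach j' → Disjoint (slots j) (slots j')

namespace Schedule

variable {I : BInstance}

/-- A schedule is feasible if every job occupies consecutive time slots. -/
def Feasible (S : Schedule I) : Prop :=
  ∀ j, ∃ s, S.slots j = Finset.Ico s (s + I.p j)

/-- The makespan: the largest slot used by any job. -/
def Cmax (S : Schedule I) : ℕ :=
  Finset.univ.sup fun j => (S.slots j).sup id

/-- The total energy cost. -/
def TEC (S : Schedule I) : ℝ :=
  ∑ j, I.u (S.mach j) * ∑ t ∈ S.slots j, I.c t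

/-- Two schedules are equivalent if they have the same makespan and the same TEC. -/
def Equivalent (S S' : Schedule I) : Prop :=
  S.Cmax = S'.Cmax ∧ S.TEC = S'.TEC

theorem slots_nonempty (S : Schedule I) (j : Fin I.N) : (S.slots j).Nonempty := by
  rw [← Finset.card_pos, S.slots_card]
  exact (I.hp j).1

/-- Slot `t` is occupied on machine `h`: some job assigned to `h` contains `t`. -/
def Occupied (S : Schedule I) (h : Fin I.M) (t : ℕ) : Prop :=
  ∃ j, S.mach j = h ∧ t ∈ S.slots j

/-- A split-schedule: for every job `j`, every slot between `min (T j)` and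
`max (T j)` is occupied on the machine of `j`. -/
def IsSplit (S : Schedule I) : Prop :=
  ∀ j t, (S.slots j).min' (S.slots_nonempty j) ≤ t →
    t ≤ (S.slots j).max' (S.slots_nonempty j) → S.Occupied (S.mach j) t

/-- `S` dominates `S'`. -/
def Dominates (S S' : Schedule I) : Prop :=
  S.Cmax ≤ S'.Cmax ∧ S.TEC ≤ S'.TEC ∧ (S.Cmax < S'.Cmax ∨ S.TEC < S'.TEC)

end Schedule

/-- The set of distinct processing times. -/
def PJ (I : BInstance) : Finset ℕ := Finset.univ.image I.p

/-- The set of jobs with processing time `d`. -/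
def Jd (I : BInstance) (d : ℕ) : Finset (Fin I.N) := Finset.univ.filter fun j => I.p j = d

/-- The makespan lower bound `max { ⌊(∑ p j) / M⌋, max p j }`. -/
def Klb (I : BInstance) : ℕ := max ((∑ j, I.p j) / I.M) (Finset.univ.sup I.p)

/-- `bcost I d t = ∑_{k=t}^{t+d-1} c k`, the cumulative cost of `d` slots from `t`. -/
def bcost (I : BInstance) (d t : ℕ) : ℝ := ∑ k ∈ Finset.Icc t (t + d - 1), I.c k

/-!
On each machine `h` let `O` be the set of occupied slots and list the jobs of `h` by start
time. Give each job the slots of `O` whose rank in `O` (number of smaller elements of `O`)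
lies in `[A, A + p)`, where `A` is the total processing time of the jobs of `h` starting
earlier. The occupied slots and the order of the start times are then preserved
automatically; the split property is what makes the new slot sets consecutive. Indeed, if
`g` is a free slot of `h`, every job of `h` starting before `g` lies entirely before `g`, so
the rank of `g` in `O` is the total processing time of the jobs starting before `g`, which
never lies strictly between `A` and `A + p`.
-/

open Finset

namespace Finset

section Rank

variable {α : Type*} [LinearOrder α] (s : Finset α)

def numBelow (t : α) : ℕ := #{x ∈ s | x < t}

def rankSlice (a b : ℕ) : Finset α := {t ∈ s | a ≤ s.numBelow t ∧ s.numBelow t < b}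

variable {s}

theorem numBelow_mono {t t' : α} (h : t ≤ t') : s.numBelow t ≤ s.numBelow t' :=
  card_le_card <| monotone_filter_right s fun _ _ hx => hx.trans_le h

theorem numBelow_lt_numBelow {t t' : α} (ht : t ∈ s) (h : t < t') :
    s.numBelow t < s.numBelow t' :=
  card_lt_card <| (ssubset_iff_of_subset (monotone_filter_right s fun _ _ hx => hx.trans h)).2
    ⟨t, mem_filter.2 ⟨ht, h⟩, fun hmem => (mem_filter.1 hmem).2.false⟩

theorem lt_of_numBelow_lt {t t' : α} (h : s.numBelow t < s.numBelow t') : t < t' :=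
  lt_of_not_ge fun h' => (numBelow_mono h').not_gt h

theorem numBelow_lt_card {t : α} (ht : t ∈ s) : s.numBelow t < #s :=
  card_lt_card <| filter_ssubset.2 ⟨t, ht, lt_irrefl t⟩

theorem numBelow_injOn : Set.InjOn s.numBelow s := fun t ht t' ht' h => by
  by_contra hne
  rcases lt_or_gt_of_ne hne with hlt | hlt
  · exact (numBelow_lt_numBelow ht hlt).ne h
  · exact (numBelow_lt_numBelow ht' hlt).ne' h

theorem image_numBelow : s.image s.numBelow = range #s := by
  refine eq_of_subset_of_card_le (fun r hr => ?_) ?_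
  · obtain ⟨t, ht, rfl⟩ := mem_image.1 hr
    exact mem_range.2 (numBelow_lt_card ht)
  · rw [card_range, card_image_of_injOn numBelow_injOn]

theorem rankSlice_subset (a b : ℕ) : s.rankSlice a b ⊆ s := filter_subset _ _

theorem card_rankSlice {a b : ℕ} (hb : b ≤ #s) : #(s.rankSlice a b) = b - a := by
  have himage : (s.rankSlice a b).image s.numBelow = Ico a b := by
    ext r
    simp only [rankSlice, mem_image, mem_filter, mem_Ico]
    constructor
    · rintro ⟨t, ⟨-, hat, htb⟩, rfl⟩
      exact ⟨hat, htb⟩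
    · rintro ⟨har, hrb⟩
      obtain ⟨t, ht, rfl⟩ := mem_image.1 (image_numBelow (s := s) ▸ mem_range.2 (hrb.trans_le hb))
      exact ⟨t, ⟨ht, har, hrb⟩, rfl⟩
  rw [← Nat.card_Ico, ← himage, card_image_of_injOn (numBelow_injOn.mono (rankSlice_subset a b))]

theorem lt_of_mem_rankSlice {a b a' b' : ℕ} {x y : α} (hx : x ∈ s.rankSlice a b)
    (hy : y ∈ s.rankSlice a' b') (h : b ≤ a') : x < y :=
  lt_of_numBelow_lt <| (mem_filter.1 hx).2.2.trans_le <| h.trans (mem_filter.1 hy).2.1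

theorem ordConnected_rankSlice {a b : ℕ}
    (hgap : ∀ g ∉ s, s.numBelow g ≤ a ∨ b ≤ s.numBelow g) :
    (s.rankSlice a b : Set α).OrdConnected := by
  refine Set.ordConnected_def.2 fun x hx y hy g ⟨hxg, hgy⟩ => ?_
  obtain ⟨hxs, hax, -⟩ := mem_filter.1 hx
  obtain ⟨-, -, hyb⟩ := mem_filter.1 hy
  have hgb := (numBelow_mono hgy).trans_lt hyb
  by_cases hgs : g ∈ s
  · exact mem_filter.2 ⟨hgs, hax.trans (numBelow_mono hxg), hgb⟩
  · have hag := hax.trans_lt (numBelow_lt_numBelow hxs (hxg.lt_of_ne (ne_of_mem_of_not_mem hxs hgs)))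
    rcases hgap g hgs with h | h <;> omega

end Rank

theorem eq_Ico_min'_of_ordConnected {s : Finset ℕ} (hs : s.Nonempty)
    (hconn : (s : Set ℕ).OrdConnected) : s = Ico (s.min' hs) (s.min' hs + #s) := by
  have hIcc : s = Icc (s.min' hs) (s.max' hs) := by
    refine eq_of_subset_of_card_le (fun t ht => mem_Icc.2 ⟨min'_le s t ht, le_max' s t ht⟩) ?_
    refine card_le_card fun t ht => ?_
    exact_mod_cast hconn.out (min'_mem s hs) (max'_mem s hs) (by simpa using ht)
  have hle := min'_le s _ (max'_mem s hs)
  have hcard : #s = s.max' hs + 1 - s.min' hs := by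
    conv_lhs => rw [hIcc]
    exact Nat.card_Icc _ _
  conv_lhs => rw [hIcc]
  rw [hcard]
  ext t
  simp only [mem_Icc, mem_Ico]
  omega

section PrefixSum

variable {ι α M : Type*} [LinearOrder α] [AddCommMonoid M] [PartialOrder M]
  [CanonicallyOrderedAdd M] (s : Finset ι) (f : ι → α) (w : ι → M)

theorem sum_filter_lt_mono {x y : α} (h : x ≤ y) :
    ∑ i ∈ s with f i < x, w i ≤ ∑ i ∈ s with f i < y, w i :=
  sum_le_sum_of_subset <| monotone_filter_right s fun _ _ hx => hx.trans_le h

theorem sum_filter_lt_add_le {i : ι} (hi : i ∈ s) {x : α} (hx : f i < x) :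
    ∑ j ∈ s with f j < f i, w j + w i ≤ ∑ j ∈ s with f j < x, w j := by
  classical
  rw [add_comm, ← sum_insert (f := w) (by simp)]
  refine sum_le_sum_of_subset (insert_subset_iff.2 ⟨mem_filter.2 ⟨hi, hx⟩, ?_⟩)
  exact monotone_filter_right s fun _ _ hj => hj.trans hx

end PrefixSum

end Finset

namespace Schedule

variable {I : BInstance}

section Occupancy

variable (S : Schedule I)

def jobsOn (h : Fin I.M) : Finset (Fin I.N) := {j | S.mach j = h}

def occupiedSlots (h : Fin I.M) : Finset ℕ := (S.jobsOn h).biUnion S.slots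

variable {S}

theorem mem_jobsOn {h : Fin I.M} {j : Fin I.N} : j ∈ S.jobsOn h ↔ S.mach j = h := by
  simp [jobsOn]

theorem mem_occupiedSlots {h : Fin I.M} {t : ℕ} : t ∈ S.occupiedSlots h ↔ S.Occupied h t := by
  simp [occupiedSlots, jobsOn, Occupied]

theorem occupiedSlots_subset_Icc (h : Fin I.M) : S.occupiedSlots h ⊆ Icc 1 I.K :=
  biUnion_subset.2 fun j _ => S.slots_subset j

theorem pairwiseDisjoint_slots_jobsOn (h : Fin I.M) :
    (S.jobsOn h : Set (Fin I.N)).PairwiseDisjoint S.slots := fun j hj j' hj' hne =>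
  S.disj j j' hne ((mem_jobsOn.1 hj).trans (mem_jobsOn.1 hj').symm)

theorem card_occupiedSlots (h : Fin I.M) : #(S.occupiedSlots h) = ∑ j ∈ S.jobsOn h, I.p j := by
  rw [occupiedSlots, card_biUnion (pairwiseDisjoint_slots_jobsOn h)]
  exact sum_congr rfl fun j _ => S.slots_card j

theorem TEC_eq_sum_occupiedSlots : S.TEC = ∑ h, I.u h * ∑ t ∈ S.occupiedSlots h, I.c t := by
  rw [TEC, ← sum_fiberwise univ S.mach]
  refine sum_congr rfl fun h _ => ?_
  rw [occupiedSlots, sum_biUnion (pairwiseDisjoint_slots_jobsOn h), mul_sum]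
  exact sum_congr rfl fun j hj => by rw [mem_jobsOn.1 hj]

theorem occupiedSlots_eq_of_occupied_iff {S' : Schedule I}
    (hocc : ∀ h t, S.Occupied h t ↔ S'.Occupied h t) (h : Fin I.M) :
    S.occupiedSlots h = S'.occupiedSlots h := by
  ext t
  rw [mem_occupiedSlots, mem_occupiedSlots, hocc]

theorem TEC_eq_of_occupied_iff {S' : Schedule I} (hocc : ∀ h t, S.Occupied h t ↔ S'.Occupied h t) :
    S.TEC = S'.TEC := by
  simp only [TEC_eq_sum_occupiedSlots, occupiedSlots_eq_of_occupied_iff hocc]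

theorem Cmax_eq_of_occupied_iff {S' : Schedule I}
    (hocc : ∀ h t, S.Occupied h t ↔ S'.Occupied h t) : S.Cmax = S'.Cmax := by
  have hslots (R : Schedule I) (t : ℕ) : t ∈ univ.biUnion R.slots ↔ ∃ h, R.Occupied h t := by
    simp [Occupied]
  rw [Cmax, Cmax, ← sup_biUnion, ← sup_biUnion]
  congr 1
  ext t
  simp only [hslots, hocc]

end Occupancy

section Compact

variable (S : Schedule I)

def start (j : Fin I.N) : ℕ := (S.slots j).min' (S.slots_nonempty j)

def loadBefore (h : Fin I.M) (x : ℕ) : ℕ := ∑ j ∈ S.jobsOn h with S.start j < x, I.p j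

def offset (j : Fin I.N) : ℕ := S.loadBefore (S.mach j) (S.start j)

def compactSlots (j : Fin I.N) : Finset ℕ :=
  (S.occupiedSlots (S.mach j)).rankSlice (S.offset j) (S.offset j + I.p j)

variable {S}

theorem start_mem (j : Fin I.N) : S.start j ∈ S.slots j := min'_mem _ _

theorem start_ne_start {j j' : Fin I.N} (hne : j ≠ j') (hmach : S.mach j = S.mach j') :
    S.start j ≠ S.start j' := fun h =>
  disjoint_left.1 (S.disj j j' hne hmach) (start_mem j) (h ▸ start_mem j')

theorem offset_add_le_offset {j j' : Fin I.N} (hmach : S.mach j = S.mach j')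
    (hlt : S.start j < S.start j') : S.offset j + I.p j ≤ S.offset j' := by
  unfold offset loadBefore
  rw [hmach]
  exact sum_filter_lt_add_le _ S.start I.p (mem_jobsOn.2 hmach) hlt

theorem offset_add_le_card (j : Fin I.N) :
    S.offset j + I.p j ≤ #(S.occupiedSlots (S.mach j)) := by
  rw [card_occupiedSlots]
  exact (sum_filter_lt_add_le _ S.start I.p (mem_jobsOn.2 rfl) (Nat.lt_succ_self _)).trans
    (sum_le_sum_of_subset (filter_subset _ _))

theorem numBelow_occupiedSlots (hS : S.IsSplit) {h : Fin I.M} {g : ℕ}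
    (hg : g ∉ S.occupiedSlots h) : (S.occupiedSlots h).numBelow g = S.loadBefore h g := by
  have hbelow : {t ∈ S.occupiedSlots h | t < g}
      = {j ∈ S.jobsOn h | S.start j < g}.biUnion S.slots := by
    ext t
    simp only [mem_filter, mem_biUnion, occupiedSlots]
    constructor
    · rintro ⟨⟨j, hj, ht⟩, htg⟩
      exact ⟨j, ⟨hj, (min'_le _ t ht).trans_lt htg⟩, ht⟩
    · rintro ⟨j, ⟨hj, hjg⟩, ht⟩
      refine ⟨⟨j, hj, ht⟩, lt_of_not_ge fun hgt => hg ?_⟩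
      have hocc := hS j g hjg.le (hgt.trans (le_max' _ t ht))
      rwa [mem_jobsOn.1 hj, ← mem_occupiedSlots] at hocc
  rw [numBelow, hbelow, card_biUnion ((pairwiseDisjoint_slots_jobsOn h).subset (filter_subset _ _))]
  exact sum_congr rfl fun j _ => S.slots_card j

theorem numBelow_free_le_offset_or_le (hS : S.IsSplit) {j : Fin I.N} {g : ℕ}
    (hg : g ∉ S.occupiedSlots (S.mach j)) :
    (S.occupiedSlots (S.mach j)).numBelow g ≤ S.offset j ∨
      S.offset j + I.p j ≤ (S.occupiedSlots (S.mach j)).numBelow g := by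
  rw [numBelow_occupiedSlots hS hg]
  rcases lt_or_ge (S.start j) g with hjg | hgj
  · exact Or.inr (sum_filter_lt_add_le _ S.start I.p (mem_jobsOn.2 rfl) hjg)
  · exact Or.inl (sum_filter_lt_mono _ S.start I.p hgj)

theorem lt_of_mem_compactSlots {j j' : Fin I.N} (hmach : S.mach j = S.mach j')
    (hlt : S.start j < S.start j') {x y : ℕ} (hx : x ∈ S.compactSlots j)
    (hy : y ∈ S.compactSlots j') : x < y := by
  rw [compactSlots, ← hmach] at hy
  exact lt_of_mem_rankSlice hx hy (offset_add_le_offset hmach hlt)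

theorem card_compactSlots (j : Fin I.N) : #(S.compactSlots j) = I.p j := by
  rw [compactSlots, card_rankSlice (offset_add_le_card j), Nat.add_sub_cancel_left]

variable (S)

def compact : Schedule I where
  mach := S.mach
  slots := S.compactSlots
  slots_subset j := (rankSlice_subset _ _).trans (occupiedSlots_subset_Icc _)
  slots_card := card_compactSlots
  disj j j' hne hmach := by
    rcases (start_ne_start hne hmach).lt_or_gt with hlt | hlt
    · exact disjoint_left.2 fun _ hx hy => (lt_of_mem_compactSlots hmach hlt hx hy).false
    · exact disjoint_right.2 fun _ hy hx => (lt_of_mem_compactSlots hmach.symm hlt hy hx).false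

variable {S}

theorem occupiedSlots_compact (h : Fin I.M) : S.compact.occupiedSlots h = S.occupiedSlots h := by
  refine eq_of_subset_of_card_le (biUnion_subset.2 fun j hj => ?_) ?_
  · rw [← mem_jobsOn.1 hj]
    exact rankSlice_subset _ _
  · rw [card_occupiedSlots, card_occupiedSlots]
    rfl

theorem occupied_compact_iff (h : Fin I.M) (t : ℕ) : S.compact.Occupied h t ↔ S.Occupied h t := by
  rw [← mem_occupiedSlots, ← mem_occupiedSlots, occupiedSlots_compact]

theorem feasible_compact (hS : S.IsSplit) : S.compact.Feasible := fun j => by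
  have hconn : (S.compact.slots j : Set ℕ).OrdConnected :=
    ordConnected_rankSlice fun _ hg => numBelow_free_le_offset_or_le hS hg
  have hIco := eq_Ico_min'_of_ordConnected (S.compact.slots_nonempty j) hconn
  exact ⟨_, S.compact.slots_card j ▸ hIco⟩

theorem start_compact_lt {j j' : Fin I.N} (hmach : S.mach j = S.mach j')
    (hlt : S.start j < S.start j') : S.compact.start j < S.compact.start j' :=
  lt_of_mem_compactSlots hmach hlt (start_mem (S := S.compact) j) (start_mem (S := S.compact) j')

end Compact

end Schedule

/-- every split-schedule can be converted to a feasible schedule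
with the same machine assignments, the same occupied slots on every machine
(hence the same makespan and TEC), preserving the relative order of start
times on each machine. -/
theorem statement15 (I : BInstance) (S : Schedule I) (hS : S.IsSplit) :
    ∃ S' : Schedule I, S'.Feasible ∧
      (∀ j, S'.mach j = S.mach j) ∧
      (∀ h t, S'.Occupied h t ↔ S.Occupied h t) ∧
      S'.Cmax = S.Cmax ∧ S'.TEC = S.TEC ∧
      ∀ j j', S.mach j = S.mach j' →
        (S.slots j).min' (S.slots_nonempty j) < (S.slots j').min' (S.slots_nonempty j') →
        (S'.slots j).min' (S'.slots_nonempty j) < (S'.slots j').min' (S'.slots_nonempty j') :=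
  ⟨S.compact, Schedule.feasible_compact hS, fun _ => rfl, Schedule.occupied_compact_iff,
    Schedule.Cmax_eq_of_occupied_iff Schedule.occupied_compact_iff,
    Schedule.TEC_eq_of_occupied_iff Schedule.occupied_compact_iff,
    fun _ _ => Schedule.start_compact_lt⟩
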